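/- arXiv:1605.09450 — 5 statements merged into one kernel-verified Lean document; each statement's English description precedes it below -/
import Mathlib

section
/- Let f : [0,1] → [0,1] be a strictly increasing function, and suppose there exists p̃ ∈ (0,1) such that ∑_n (1 − f^n(p̃)) < ∞, where f^n denotes the n-fold iterate of f (with f^0 the identity). Then there exists ε with 0 < ε < 1 such that for every p ∈ [p̃, 1) one has ∏_n f^n(p) > ε; that is, ε does not depend on the choice of p ∈ [p̃,1). -/
/-!
Since `f` is increasing, `f^[n] p̃ ≤ f^[n] p` for every `p ≥ p̃`, so every partial product for `p`
dominates the corresponding one for `p̃`. The iterates `f^[n] p̃` are positive and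
`∑ (1 - f^[n] p̃) < ∞`, hence `∑ log (f^[n] p̃)` converges and `∏ f^[n] p̃ = exp (∑ log (f^[n] p̃))`
is a positive number `P ≤ 1`, and any `ε ∈ (0, P)` works.
-/

open Filter Finset

theorem Real.exists_pos_hasProd_of_summable_one_sub {ι : Type*} {a : ι → ℝ}
    (ha : ∀ i, 0 < a i) (hs : Summable fun i => 1 - a i) : ∃ P, 0 < P ∧ HasProd a P := by
  have hlog : Summable fun i => Real.log (a i) := by
    simpa using Real.summable_log_one_add_of_summable (f := fun i => a i - 1) (by simpa using hs.neg)
  exact ⟨_, Real.exp_pos _, Real.hasProd_of_hasSum_log ha hlog.hasSum⟩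

section Iterate

variable {α : Type*} [Preorder α] {f : α → α} {s : Set α}

theorem MonotoneOn.iterate_le_iterate (hf : MonotoneOn f s) (hs : Set.MapsTo f s s) {x y : α}
    (hx : x ∈ s) (hy : y ∈ s) (hxy : x ≤ y) (n : ℕ) : f^[n] x ≤ f^[n] y := by
  induction n with
  | zero => exact hxy
  | succ n ih =>
    rw [Function.iterate_succ_apply', Function.iterate_succ_apply']
    exact hf (hs.iterate n hx) (hs.iterate n hy) ih

theorem StrictMonoOn.lt_iterate (hf : StrictMonoOn f s) (hs : Set.MapsTo f s s) {a x : α}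
    (ha : a ∈ s) (hfa : a ≤ f a) (hx : x ∈ s) (hax : a < x) (n : ℕ) : a < f^[n] x := by
  induction n with
  | zero => exact hax
  | succ n ih =>
    rw [Function.iterate_succ_apply']
    exact hfa.trans_lt (hf ha (hs.iterate n hx) ih)

end Iterate

/-- Let `f : [0,1] → [0,1]` be strictly increasing with `∑ (1 - f^[n] p̃) < ∞` for some
`p̃ ∈ (0,1)`. Then there is `ε ∈ (0,1)`, independent of `p`, such that for every
`p ∈ [p̃,1)` the infinite product `∏ f^[n] p` (limit of the partial products) exceeds `ε`. -/
theorem stmt4 (f : ℝ → ℝ) (hmap : Set.MapsTo f (Set.Icc 0 1) (Set.Icc 0 1))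
    (hmono : StrictMonoOn f (Set.Icc 0 1))
    (ptilde : ℝ) (hpt : ptilde ∈ Set.Ioo (0 : ℝ) 1)
    (hsum : Summable (fun n => 1 - f^[n] ptilde)) :
    ∃ ε : ℝ, 0 < ε ∧ ε < 1 ∧ ∀ p ∈ Set.Ico ptilde 1, ∀ L : ℝ,
      Tendsto (fun n => ∏ k ∈ Finset.range n, f^[k] p) atTop (nhds L) → ε < L := by
  have hpt_mem : ptilde ∈ Set.Icc (0 : ℝ) 1 := Set.Ioo_subset_Icc_self hpt
  have h0_mem : (0 : ℝ) ∈ Set.Icc 0 1 := ⟨le_rfl, zero_le_one⟩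
  have hpos : ∀ n, 0 < f^[n] ptilde := hmono.lt_iterate hmap h0_mem (hmap h0_mem).1 hpt_mem hpt.1
  obtain ⟨P, hP, hprod⟩ := Real.exists_pos_hasProd_of_summable_one_sub hpos hsum
  have hP_le : P ≤ 1 := le_of_tendsto' hprod.tendsto_prod_nat fun n =>
    prod_le_one (fun k _ => (hpos k).le) fun k _ => (hmap.iterate k hpt_mem).2
  refine ⟨P / 2, by positivity, by linarith, fun p hp L hL => ?_⟩
  have hp_mem : p ∈ Set.Icc (0 : ℝ) 1 := ⟨hpt.1.le.trans hp.1, hp.2.le⟩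
  have hPL : P ≤ L := le_of_tendsto_of_tendsto' hprod.tendsto_prod_nat hL fun n =>
    prod_le_prod (fun k _ => (hpos k).le) fun k _ =>
      hmono.monotoneOn.iterate_le_iterate hmap hpt_mem hp_mem hp.1 k
  linarith
end

section
/- Let (Ω, ℱ, ℙ) be a probability space with a filtration (ℱ_n)_{n∈ℕ}, and let T : Ω → ℕ ∪ {∞} be a stopping time with respect to (ℱ_n). Suppose there exist ε > 0 and N ∈ ℕ, N ≥ 1, such that for every n ∈ ℕ, ℙ(T ≤ n + N ∣ ℱ_n) ≥ ε almost surely (i.e. the conditional expectation of the indicator of {T ≤ n+N} given ℱ_n is ≥ ε almost surely). Then for every k ∈ ℕ, ℙ(T > kN) ≤ (1 − ε)^k. -/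
open MeasureTheory Filter

/-! On the `ℱ (k * N)`-measurable event `{k * N < T}` the conditional probability of stopping
within the next `N` steps is at least `ε`; integrating it over that event gives
`P(T > (k + 1) * N) ≤ (1 - ε) * P(T > k * N)`, and induction on `k` finishes. -/

namespace MeasureTheory

section CondExpIndicator

variable {Ω : Type*} {m m₀ : MeasurableSpace Ω} {μ : Measure Ω} {A B : Set Ω} {ε : ℝ}

theorem mul_measureReal_le_measureReal_inter_of_le_condExp [IsFiniteMeasure μ] (hm : m ≤ m₀)
    (hA : MeasurableSet[m] A) (hB : MeasurableSet B)
    (hε : ∀ᵐ ω ∂μ, ε ≤ μ[B.indicator (fun _ => (1 : ℝ)) | m] ω) :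
    ε * μ.real A ≤ μ.real (A ∩ B) :=
  calc ε * μ.real A = ∫ _ in A, ε ∂μ := by simp [mul_comm]
    _ ≤ ∫ ω in A, μ[B.indicator (fun _ => (1 : ℝ)) | m] ω ∂μ :=
      integral_mono_ae (integrable_const ε).restrict integrable_condExp.restrict
        (ae_restrict_of_ae hε)
    _ = ∫ ω in A, B.indicator (fun _ => (1 : ℝ)) ω ∂μ :=
      setIntegral_condExp hm ((integrable_const 1).indicator hB) hA
    _ = μ.real (A ∩ B) := by simp [setIntegral_indicator hB]

theorem measureReal_sdiff_le_of_le_condExp [IsFiniteMeasure μ] (hm : m ≤ m₀)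
    (hA : MeasurableSet[m] A) (hB : MeasurableSet B)
    (hε : ∀ᵐ ω ∂μ, ε ≤ μ[B.indicator (fun _ => (1 : ℝ)) | m] ω) :
    μ.real (A \ B) ≤ (1 - ε) * μ.real A := by
  have hinter := mul_measureReal_le_measureReal_inter_of_le_condExp hm hA hB hε
  have hsplit := measureReal_inter_add_sdiff (μ := μ) (s := A) hB
  linarith

theorem le_one_of_le_condExp_indicator [IsProbabilityMeasure μ] (hm : m ≤ m₀)
    (hB : MeasurableSet B) (hε : ∀ᵐ ω ∂μ, ε ≤ μ[B.indicator (fun _ => (1 : ℝ)) | m] ω) :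
    ε ≤ 1 :=
  calc ε = ε * μ.real Set.univ := by simp
    _ ≤ μ.real (Set.univ ∩ B) :=
      mul_measureReal_le_measureReal_inter_of_le_condExp hm MeasurableSet.univ hB hε
    _ ≤ 1 := measureReal_le_one

end CondExpIndicator

theorem IsStoppingTime.measureReal_lt_le_pow_of_le_condExp {Ω : Type*} {m₀ : MeasurableSpace Ω}
    {μ : Measure Ω} [IsProbabilityMeasure μ] {ℱ : Filtration ℕ m₀} {T : Ω → ℕ∞}
    (hT : IsStoppingTime ℱ T) {ε : ℝ} (hε : ε ≤ 1) {N : ℕ}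
    (hcond : ∀ n : ℕ, ∀ᵐ ω ∂μ,
      ε ≤ μ[{ω | T ω ≤ ((n + N : ℕ) : ℕ∞)}.indicator (fun _ => (1 : ℝ)) | ℱ n] ω)
    (k : ℕ) : μ.real {ω | ((k * N : ℕ) : ℕ∞) < T ω} ≤ (1 - ε) ^ k := by
  induction k with
  | zero => simp [measureReal_le_one]
  | succ k ih =>
    have hsucc : {ω | (((k + 1) * N : ℕ) : ℕ∞) < T ω}
        = {ω | ((k * N : ℕ) : ℕ∞) < T ω} \ {ω | T ω ≤ ((k * N + N : ℕ) : ℕ∞)} := by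
      ext ω
      simp only [Nat.succ_mul, Set.mem_ofPred_eq, Set.mem_sdiff, not_le]
      exact ⟨fun h => ⟨lt_of_le_of_lt (by gcongr; omega) h, h⟩, fun h => h.2⟩
    calc μ.real {ω | (((k + 1) * N : ℕ) : ℕ∞) < T ω}
        ≤ (1 - ε) * μ.real {ω | ((k * N : ℕ) : ℕ∞) < T ω} := by
          rw [hsucc]
          exact measureReal_sdiff_le_of_le_condExp (ℱ.le _) (hT.measurableSet_gt _)
            (ℱ.le _ _ (hT _)) (hcond (k * N))
      _ ≤ (1 - ε) * (1 - ε) ^ k := by gcongr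
      _ = (1 - ε) ^ (k + 1) := by ring

end MeasureTheory

theorem stmt5_general {Ω : Type*} {m : MeasurableSpace Ω} (P : Measure Ω) [IsProbabilityMeasure P]
    (ℱ : Filtration ℕ m) (T : Ω → ℕ∞)
    (hT : ∀ n : ℕ, MeasurableSet[ℱ n] {ω | T ω ≤ (n : ℕ∞)})
    (ε : ℝ) (N : ℕ)
    (hcond : ∀ n : ℕ, ∀ᵐ ω ∂P,
      ε ≤ (P[(Set.indicator {ω' | T ω' ≤ ((n + N : ℕ) : ℕ∞)} (fun _ => (1 : ℝ))) | ℱ n]) ω) :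
    ∀ k : ℕ, P {ω | ((k * N : ℕ) : ℕ∞) < T ω} ≤ ENNReal.ofReal ((1 - ε) ^ k) := by
  intro k
  have hε : ε ≤ 1 := le_one_of_le_condExp_indicator (ℱ.le 0) (ℱ.le _ _ (hT _)) (hcond 0)
  rw [ENNReal.le_ofReal_iff_toReal_le (measure_ne_top _ _) (pow_nonneg (by linarith) k)]
  exact IsStoppingTime.measureReal_lt_le_pow_of_le_condExp hT hε hcond k

/-- If `T` is a stopping time (valued in `ℕ ∪ {∞}`) for the filtration `(ℱ n)` and
there are `ε > 0` and `N ≥ 1` with `P(T ≤ n + N ∣ ℱ n) ≥ ε` a.s. for every `n`, then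
`P(T > k·N) ≤ (1 - ε)^k` for every `k`. -/
theorem stmt5 {Ω : Type*} {m : MeasurableSpace Ω} (P : Measure Ω) [IsProbabilityMeasure P]
    (ℱ : Filtration ℕ m) (T : Ω → ℕ∞)
    (hT : ∀ n : ℕ, MeasurableSet[ℱ n] {ω | T ω ≤ (n : ℕ∞)})
    (ε : ℝ) (hε : 0 < ε) (N : ℕ) (hN : 1 ≤ N)
    (hcond : ∀ n : ℕ, ∀ᵐ ω ∂P,
      ε ≤ (P[(Set.indicator {ω' | T ω' ≤ ((n + N : ℕ) : ℕ∞)} (fun _ => (1 : ℝ))) | ℱ n]) ω) :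
    ∀ k : ℕ, P {ω | ((k * N : ℕ) : ℕ∞) < T ω} ≤ ENNReal.ofReal ((1 - ε) ^ k) :=
  stmt5_general P ℱ T hT ε N hcond
end

section
/- Let (Ω, ℱ, ℙ) be a probability space with a filtration (ℱ_n)_{n∈ℕ}, and let T : Ω → ℕ ∪ {∞} be a stopping time with respect to (ℱ_n). Suppose there exist ε > 0 and N ∈ ℕ, N ≥ 1, such that for every n ∈ ℕ, ℙ(T ≤ n + N ∣ ℱ_n) ≥ ε almost surely (i.e. the conditional expectation of the indicator of {T ≤ n+N} given ℱ_n is ≥ ε almost surely). Then T is integrable: E[T] < ∞; in particular T < ∞ almost surely. -/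
open MeasureTheory Filter ENNReal

/-! On `{n < T}`, which lies in `ℱ n`, the time `T` stops within the next `N` steps with
conditional probability at least `ε`; integrating over `{n < T}` gives
`P (n + N < T) ≤ (1 - ε) P (n < T)`. The tails therefore decay geometrically,
`P (n < T) ≤ (1 - ε) ^ (n / N)`, and `E[T] = ∑ₙ P (n < T) ≤ N / ε`. -/

lemma ENat.toENNReal_eq_tsum_ite (k : ℕ∞) :
    (k : ℝ≥0∞) = ∑' n : ℕ, if (n : ℕ∞) < k then 1 else 0 := by
  induction k using ENat.recTopCoe with
  | top => simp
  | coe k =>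
    rw [tsum_eq_sum (s := Finset.range k) (fun n hn ↦ by simpa using hn)]
    simp [Finset.filter_true_of_mem]

lemma ENNReal.tsum_pow_div {N : ℕ} [NeZero N] (c : ℝ≥0∞) :
    ∑' n : ℕ, c ^ (n / N) = N * (1 - c)⁻¹ := by
  have hdiv (k : ℕ) (j : Fin N) : (k * N + j) / N = k := by
    rw [add_comm, Nat.add_mul_div_right _ _ (Nat.pos_of_neZero N), Nat.div_eq_of_lt j.isLt,
      zero_add]
  rw [← (Nat.divModEquiv N).symm.tsum_eq]
  simp only [Nat.divModEquiv_symm_apply]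
  rw [ENNReal.tsum_prod (f := fun k (j : Fin N) ↦ c ^ ((k * N + j) / N))]
  simp [hdiv, ENNReal.tsum_mul_left, ENNReal.tsum_geometric]

lemma Antitone.le_pow_div_mul {u : ℕ → ℝ≥0∞} (hu : Antitone u) {N : ℕ} {c : ℝ≥0∞}
    (h : ∀ n, u (n + N) ≤ c * u n) (n : ℕ) : u n ≤ c ^ (n / N) * u 0 := by
  have hmul : ∀ k, u (k * N) ≤ c ^ k * u 0 := by
    intro k
    induction k with
    | zero => simp
    | succ k ih =>
      calc u ((k + 1) * N) = u (k * N + N) := by rw [add_mul, one_mul]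
        _ ≤ c * u (k * N) := h _
        _ ≤ c * (c ^ k * u 0) := by gcongr
        _ = c ^ (k + 1) * u 0 := by ring
  exact (hu (Nat.div_mul_le_self n N)).trans (hmul _)

namespace MeasureTheory

variable {Ω : Type*} {m : MeasurableSpace Ω} {P : Measure Ω}

lemma toENNReal_comp_eq_tsum_indicator (T : Ω → ℕ∞) :
    (fun ω ↦ (T ω : ℝ≥0∞)) = fun ω ↦ ∑' n : ℕ, {ω | (n : ℕ∞) < T ω}.indicator 1 ω := by
  ext ω
  simp only [ENat.toENNReal_eq_tsum_ite (T ω), Set.indicator_apply, Set.mem_ofPred_eq,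
    Pi.one_apply]

lemma measurable_toENNReal_comp {T : Ω → ℕ∞}
    (hT : ∀ n : ℕ, MeasurableSet {ω | (n : ℕ∞) < T ω}) : Measurable fun ω ↦ (T ω : ℝ≥0∞) := by
  rw [toENNReal_comp_eq_tsum_indicator]
  exact Measurable.tsum fun n ↦ measurable_one.indicator (hT n)

lemma lintegral_toENNReal_eq_tsum_measure_lt {T : Ω → ℕ∞}
    (hT : ∀ n : ℕ, MeasurableSet {ω | (n : ℕ∞) < T ω}) :
    ∫⁻ ω, (T ω : ℝ≥0∞) ∂P = ∑' n : ℕ, P {ω | (n : ℕ∞) < T ω} := by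
  rw [toENNReal_comp_eq_tsum_indicator,
    lintegral_tsum fun n ↦ (measurable_one.indicator (hT n)).aemeasurable]
  exact tsum_congr fun n ↦ lintegral_indicator_one (hT n)

lemma ofReal_mul_measure_le_measure_inter_of_le_condExp [IsFiniteMeasure P]
    {m' : MeasurableSpace Ω} (hm : m' ≤ m) {B C : Set Ω} (hB : MeasurableSet[m'] B)
    (hC : MeasurableSet[m] C) {ε : ℝ}
    (hε : ∀ᵐ ω ∂P, ε ≤ P[C.indicator (fun _ ↦ (1 : ℝ)) | m'] ω) :
    ENNReal.ofReal ε * P B ≤ P (B ∩ C) := by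
  have hreal : ε * P.real B ≤ P.real (B ∩ C) :=
    calc ε * P.real B = ∫ _ in B, ε ∂P := by rw [setIntegral_const, smul_eq_mul, mul_comm]
      _ ≤ ∫ ω in B, P[C.indicator (fun _ ↦ (1 : ℝ)) | m'] ω ∂P :=
        setIntegral_mono_ae (integrable_const ε).integrableOn integrable_condExp.integrableOn hε
      _ = P.real (B ∩ C) := by
        rw [setIntegral_condExp hm ((integrable_const (1 : ℝ)).indicator hC) hB,
          setIntegral_indicator hC, setIntegral_const, smul_eq_mul, mul_one]
  calc ENNReal.ofReal ε * P B = ENNReal.ofReal (ε * P.real B) := by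
        rw [ENNReal.ofReal_mul' measureReal_nonneg, ofReal_measureReal]
    _ ≤ ENNReal.ofReal (P.real (B ∩ C)) := ENNReal.ofReal_le_ofReal hreal
    _ = P (B ∩ C) := ofReal_measureReal

lemma IsStoppingTime.measure_lt_add_le [IsFiniteMeasure P] {ℱ : Filtration ℕ m} {T : Ω → ℕ∞}
    (hT : IsStoppingTime ℱ T) {ε : ℝ} {n N : ℕ}
    (hε : ∀ᵐ ω ∂P,
      ε ≤ P[{ω | T ω ≤ ((n + N : ℕ) : ℕ∞)}.indicator (fun _ ↦ (1 : ℝ)) | ℱ n] ω) :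
    P {ω | ((n + N : ℕ) : ℕ∞) < T ω} ≤ (1 - ENNReal.ofReal ε) * P {ω | (n : ℕ∞) < T ω} := by
  set S := {ω | (n : ℕ∞) < T ω}
  set A := {ω | T ω ≤ ((n + N : ℕ) : ℕ∞)}
  have hA : MeasurableSet A := ℱ.le _ _ (hT.measurableSet_le (n + N))
  have hSA : S \ A = {ω | ((n + N : ℕ) : ℕ∞) < T ω} := by
    ext ω
    simp only [S, A, Set.mem_sdiff, Set.mem_ofPred_eq, not_le, and_iff_right_iff_imp]
    exact (Nat.cast_le.2 (Nat.le_add_right n N)).trans_lt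
  have hstop :=
    ofReal_mul_measure_le_measure_inter_of_le_condExp (ℱ.le n) (hT.measurableSet_gt n) hA hε
  calc P {ω | ((n + N : ℕ) : ℕ∞) < T ω} = P S - P (S ∩ A) := by
        rw [← hSA, ← Set.sdiff_self_inter]
        exact measure_sdiff Set.inter_subset_left
          ((ℱ.le n _ (hT.measurableSet_gt n)).inter hA).nullMeasurableSet (measure_ne_top _ _)
    _ ≤ P S - ENNReal.ofReal ε * P S := tsub_le_tsub_left hstop _
    _ = (1 - ENNReal.ofReal ε) * P S := by
        rw [ENNReal.sub_mul fun _ _ ↦ measure_ne_top _ _, one_mul]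

end MeasureTheory

/-- If `T` is a stopping time (valued in `ℕ ∪ {∞}`) for the filtration `(ℱ n)` and
there are `ε > 0` and `N ≥ 1` with `P(T ≤ n + N ∣ ℱ n) ≥ ε` a.s. for every `n`, then
`T` is integrable: `E[T] < ∞`; in particular `T < ∞` almost surely. -/
theorem stmt6 {Ω : Type*} {m : MeasurableSpace Ω} (P : Measure Ω) [IsProbabilityMeasure P]
    (ℱ : Filtration ℕ m) (T : Ω → ℕ∞)
    (hT : ∀ n : ℕ, MeasurableSet[ℱ n] {ω | T ω ≤ (n : ℕ∞)})
    (ε : ℝ) (hε : 0 < ε) (N : ℕ) (hN : 1 ≤ N)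
    (hcond : ∀ n : ℕ, ∀ᵐ ω ∂P,
      ε ≤ (P[(Set.indicator {ω' | T ω' ≤ ((n + N : ℕ) : ℕ∞)} (fun _ => (1 : ℝ))) | ℱ n]) ω) :
    (∫⁻ ω, ENat.toENNReal (T ω) ∂P) < ⊤ ∧ ∀ᵐ ω ∂P, T ω < ⊤ := by
  have hτ : IsStoppingTime ℱ T := hT
  have : NeZero N := ⟨by omega⟩
  have htail : ∀ n : ℕ, MeasurableSet {ω | (n : ℕ∞) < T ω} :=
    fun n ↦ ℱ.le n _ (hτ.measurableSet_gt n)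
  set c := 1 - ENNReal.ofReal ε
  have hc : c < 1 := ENNReal.sub_lt_self one_ne_top one_ne_zero (ofReal_pos.2 hε).ne'
  have hdecay (n : ℕ) : P {ω | (n : ℕ∞) < T ω} ≤ c ^ (n / N) := by
    have hanti : Antitone fun n : ℕ ↦ P {ω | (n : ℕ∞) < T ω} :=
      fun _ _ hkn ↦ measure_mono <|
        Set.ofPred_subset_ofPred.2 fun _ ↦ (Nat.cast_le.2 hkn).trans_lt
    exact (hanti.le_pow_div_mul (fun n ↦ hτ.measure_lt_add_le (hcond n)) n).trans
      (mul_le_of_le_one_right' prob_le_one)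
  have hfin : ∫⁻ ω, (T ω : ℝ≥0∞) ∂P < ⊤ :=
    calc ∫⁻ ω, (T ω : ℝ≥0∞) ∂P = ∑' n : ℕ, P {ω | (n : ℕ∞) < T ω} :=
          lintegral_toENNReal_eq_tsum_measure_lt htail
      _ ≤ ∑' n : ℕ, c ^ (n / N) := ENNReal.tsum_le_tsum hdecay
      _ = N * (1 - c)⁻¹ := ENNReal.tsum_pow_div c
      _ < ⊤ := mul_lt_top (natCast_lt_top N) (inv_lt_top.2 (tsub_pos_of_lt hc))
  refine ⟨hfin, ?_⟩
  filter_upwards [ae_lt_top (measurable_toENNReal_comp htail) hfin.ne] with ω hω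
  exact ENat.toENNReal_lt_top.1 hω
end

section
/- Let X be a measurable space, κ a Markov kernel from X to X, and for x ∈ X let ℙ_x denote the law of the time-homogeneous Markov chain (X_n)_{n∈ℕ} with X_0 = x and transition kernel κ (the trajectory measure on X^ℕ given by the Ionescu–Tulcea construction). Let E ⊆ X be a measurable set and ε > 0. Assume: (i) for every x ∈ X, ℙ_x-almost surely the chain visits E infinitely often (i.e. {n : X_n ∈ E} is infinite); (ii) for every y ∈ E, ℙ_y(X_n ∈ E for all n ≥ 0) ≥ ε. Then for every x ∈ X, ℙ_x-almost surely the chain is eventually in E, i.e. there exists n_0 such that X_n ∈ E for all n ≥ n_0. -/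
/-!
Let `A` be the event that the chain is eventually in `E`. By Lévy's upward theorem,
`ℙ_x(A | ℱ_n) → 𝟙_A` almost surely. Since `A` is shift invariant, the Markov property gives
`ℙ_x(A | ℱ_n) ≥ ℙ_{X_n}(X_k ∈ E for all k) ≥ ε` on `{X_n ∈ E}` (the map `y ↦ ℙ_y(A)` need not be
measurable, so this is transferred by comparing integrals over `ℱ_n`-measurable sets). As
`X_n ∈ E` for infinitely many `n` almost surely, `𝟙_A ≥ ε > 0`, that is `A` holds, almost surely.
-/

open MeasureTheory ProbabilityTheory Filter ENNReal

section LevyZeroOne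

variable {Ω : Type*} {m m₀ : MeasurableSpace Ω} {μ : Measure[m₀] Ω} [IsFiniteMeasure μ]

lemma ae_le_condExp_indicator_one (hm : m ≤ m₀) {G A : Set Ω} (hG : MeasurableSet[m] G)
    (hA : MeasurableSet A) {c : ℝ} (hc : 0 ≤ c)
    (h : ∀ s, MeasurableSet[m] s → ENNReal.ofReal c * μ (s ∩ G) ≤ μ (s ∩ A)) :
    ∀ᵐ ω ∂μ, ω ∈ G → c ≤ μ[A.indicator 1 | m] ω := by
  have hle : G.indicator (fun _ ↦ c) ≤ᵐ[μ.trim hm] μ[A.indicator 1 | m] := by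
    refine ae_le_of_forall_setIntegral_le
      (((integrable_const c).indicator (hm G hG)).trim hm
        (stronglyMeasurable_const.indicator hG))
      (integrable_condExp.trim hm stronglyMeasurable_condExp) fun s hs _ ↦ ?_
    rw [← setIntegral_trim hm (stronglyMeasurable_const.indicator hG) hs,
      ← setIntegral_trim hm stronglyMeasurable_condExp hs,
      setIntegral_condExp hm ((integrable_const 1).indicator hA) hs,
      integral_indicator (hm G hG), Measure.restrict_restrict (hm G hG), setIntegral_const,
      smul_eq_mul, integral_indicator_one hA, measureReal_restrict_apply hA,
      Set.inter_comm G, Set.inter_comm A, mul_comm]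
    have := ENNReal.toReal_mono (measure_ne_top μ _) (h s hs)
    rwa [ENNReal.toReal_mul, ENNReal.toReal_ofReal hc] at this
  filter_upwards [ae_of_ae_trim hm hle] with ω hω hωG
  simpa [hωG] using hω

lemma ae_mem_of_frequently_mem_of_measure_inter_le (ℱ : Filtration ℕ m₀) {A : Set Ω}
    (hA : MeasurableSet[⨆ n, ℱ n] A) {G : ℕ → Set Ω} (hG : ∀ n, MeasurableSet[ℱ n] (G n))
    {c : ℝ} (hc : 0 < c)
    (h : ∀ n s, MeasurableSet[ℱ n] s → ENNReal.ofReal c * μ (s ∩ G n) ≤ μ (s ∩ A)) :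
    ∀ᵐ ω ∂μ, (∃ᶠ n in atTop, ω ∈ G n) → ω ∈ A := by
  have hA₀ : MeasurableSet A := iSup_le ℱ.le A hA
  have hlim := ((integrable_const (1 : ℝ)).indicator hA₀).tendsto_ae_condExp (μ := μ) (ℱ := ℱ)
    (stronglyMeasurable_const.indicator hA)
  have hlow : ∀ᵐ ω ∂μ, ∀ n, ω ∈ G n → c ≤ μ[A.indicator 1 | ℱ n] ω :=
    ae_all_iff.2 fun n ↦ ae_le_condExp_indicator_one (ℱ.le n) (hG n) hA₀ hc.le (h n)
  filter_upwards [hlim, hlow] with ω hlim hlow hfreq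
  have hcA : c ≤ A.indicator 1 ω := ge_of_tendsto_of_frequently hlim (hfreq.mono hlow)
  by_contra hω
  simp [hω] at hcA
  linarith

end LevyZeroOne

section ShiftMarkov

variable {X : Type*} [MeasurableSpace X]

lemma measurable_apply_comap_restrict_fin {n j : ℕ} (hj : j ≤ n) :
    Measurable[MeasurableSpace.comap (fun (ω : ℕ → X) (i : Fin (n + 1)) ↦ ω i) inferInstance]
      (fun ω : ℕ → X ↦ ω j) :=
  (measurable_pi_apply (⟨j, by omega⟩ : Fin (n + 1))).comp
    (comap_measurable (fun (ω : ℕ → X) (i : Fin (n + 1)) ↦ ω i))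

variable (X) in
def cylinderFiltration : Filtration ℕ (MeasurableSpace.pi : MeasurableSpace (ℕ → X)) where
  seq n := MeasurableSpace.comap (fun (ω : ℕ → X) (i : Fin (n + 1)) ↦ ω i) inferInstance
  mono' _ _ hmn := (@measurable_pi_lambda _ _ _ (_) _ _ fun i ↦
    measurable_apply_comap_restrict_fin (by omega)).comap_le
  le' _ := (measurable_pi_lambda _ fun _ ↦ measurable_pi_apply _).comap_le

lemma measurableSet_iSup_cylinderFiltration_eventually_mem {E : Set X} (hE : MeasurableSet E) :
    MeasurableSet[⨆ n, cylinderFiltration X n] {ω : ℕ → X | ∃ n₀, ∀ n ≥ n₀, ω n ∈ E} := by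
  have hunion : {ω : ℕ → X | ∃ n₀, ∀ n ≥ n₀, ω n ∈ E}
      = ⋃ n₀, ⋂ n, ⋂ (_ : n ≥ n₀), (fun ω : ℕ → X ↦ ω n) ⁻¹' E := by
    ext ω
    simp
  rw [hunion]
  exact .iUnion fun _ ↦ .iInter fun n ↦ .iInter fun _ ↦
    le_iSup (cylinderFiltration X) n _ (measurable_apply_comap_restrict_fin le_rfl hE)

lemma le_measure_inter_of_shift_invariant {μ : Measure (ℕ → X)} {P : X → Measure (ℕ → X)}
    {n : ℕ} {A B : Set (ℕ → X)} (hA : MeasurableSet A)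
    (hAshift : ∀ ω, (fun k ↦ ω (k + n)) ∈ A ↔ ω ∈ A)
    (hmarkov : ∫⁻ ω in B, A.indicator 1 (fun k ↦ ω (k + n)) ∂μ
      = ∫⁻ ω in B, ∫⁻ ω', A.indicator 1 ω' ∂P (ω n) ∂μ)
    {G : Set X} (hG : MeasurableSet G) {c : ℝ≥0∞} (hc : ∀ y ∈ G, c ≤ P y A) :
    c * μ (B ∩ {ω | ω n ∈ G}) ≤ μ (B ∩ A) := by
  have hGn : MeasurableSet {ω : ℕ → X | ω n ∈ G} := measurable_pi_apply n hG
  calc c * μ (B ∩ {ω | ω n ∈ G})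
      = ∫⁻ ω in B, {ω : ℕ → X | ω n ∈ G}.indicator (fun _ ↦ c) ω ∂μ := by
        rw [lintegral_indicator_const hGn, Measure.restrict_apply hGn, Set.inter_comm]
    _ ≤ ∫⁻ ω in B, ∫⁻ ω', A.indicator 1 ω' ∂P (ω n) ∂μ := by
        refine lintegral_mono fun ω ↦ ?_
        by_cases hω : ω n ∈ G
        · simpa [hω, lintegral_indicator_one hA] using hc _ hω
        · simp [hω]
    _ = ∫⁻ ω in B, A.indicator 1 ω ∂μ := by
        rw [← hmarkov]
        congr with ω
        by_cases hω : ω ∈ A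
        · simp [hω, (hAshift ω).2 hω]
        · simp [hω, mt (hAshift ω).1 hω]
    _ = μ (B ∩ A) := by
        rw [lintegral_indicator_one hA, Measure.restrict_apply hA, Set.inter_comm]

end ShiftMarkov

theorem stmt7_general {X : Type*} [MeasurableSpace X]
    (P : X → Measure (ℕ → X))
    (hprob : ∀ x, IsProbabilityMeasure (P x))
    (hmarkov : ∀ (x : X) (n : ℕ) (B : Set (ℕ → X)),
      MeasurableSet[MeasurableSpace.comap
        (fun (ω : ℕ → X) (i : Fin (n + 1)) => ω (i : ℕ)) inferInstance] B →
      ∀ g : (ℕ → X) → ℝ≥0∞, Measurable g →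
        ∫⁻ ω in B, g (fun k => ω (k + n)) ∂(P x)
          = ∫⁻ ω in B, (∫⁻ ω', g ω' ∂(P (ω n))) ∂(P x))
    (E : Set X) (hE : MeasurableSet E) (ε : ℝ) (hε : 0 < ε)
    (hio : ∀ x, ∀ᵐ ω ∂(P x), {n : ℕ | ω n ∈ E}.Infinite)
    (hinv : ∀ y ∈ E, ENNReal.ofReal ε ≤ P y {ω | ∀ n : ℕ, ω n ∈ E}) :
    ∀ x, ∀ᵐ ω ∂(P x), ∃ n₀ : ℕ, ∀ n ≥ n₀, ω n ∈ E := by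
  intro x
  have := hprob x
  set A := {ω : ℕ → X | ∃ n₀, ∀ n ≥ n₀, ω n ∈ E}
  have hA := measurableSet_iSup_cylinderFiltration_eventually_mem hE
  have hA₀ : MeasurableSet A := iSup_le (cylinderFiltration X).le A hA
  have hAshift (n : ℕ) (ω : ℕ → X) : (fun k ↦ ω (k + n)) ∈ A ↔ ω ∈ A := by
    constructor
    · rintro ⟨n₀, h⟩
      refine ⟨n₀ + n, fun k hk ↦ ?_⟩
      simpa [Nat.sub_add_cancel (by omega : n ≤ k)] using h (k - n) (by omega)
    · rintro ⟨n₀, h⟩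
      exact ⟨n₀, fun k hk ↦ h (k + n) (by omega)⟩
  have hstay (y : X) (hy : y ∈ E) : ENNReal.ofReal ε ≤ P y A :=
    (hinv y hy).trans (measure_mono fun ω h ↦ ⟨0, fun n _ ↦ h n⟩)
  have hA_ae := ae_mem_of_frequently_mem_of_measure_inter_le (μ := P x) (cylinderFiltration X) hA
    (fun n ↦ measurable_apply_comap_restrict_fin le_rfl hE) hε fun n B hB ↦
      le_measure_inter_of_shift_invariant hA₀ (hAshift n)
        (hmarkov x n B hB _ (measurable_const.indicator hA₀)) hE hstay
  filter_upwards [hA_ae, hio x] with ω hω hinf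
  exact hω (Nat.frequently_atTop_iff_infinite.2 hinf)

/-- Let `κ` be a Markov kernel on `X` and, for `x : X`, let `P x` be the law on `X^ℕ`
of the time-homogeneous Markov chain started at `x` with transition kernel `κ` (the
Ionescu–Tulcea trajectory measure), characterized here by: `P x` is a probability
measure, the chain starts at `x`, the one-step law is `κ x`, and the time-homogeneous
Markov property holds. Let `E` be a measurable set and `ε > 0` with: (i) for every `x`,
`P x`-a.s. the chain visits `E` infinitely often; (ii) for every `y ∈ E`,
`P y (∀ n, X n ∈ E) ≥ ε`. Then for every `x`, `P x`-a.s. the chain is eventually in `E`. -/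
theorem stmt7 {X : Type*} [MeasurableSpace X]
    (κ : Kernel X X) [IsMarkovKernel κ]
    (P : X → Measure (ℕ → X))
    (hprob : ∀ x, IsProbabilityMeasure (P x))
    (hstart : ∀ x, P x {ω | ω 0 = x} = 1)
    (hstep : ∀ x, (P x).map (fun ω => ω 1) = κ x)
    (hmarkov : ∀ (x : X) (n : ℕ) (B : Set (ℕ → X)),
      MeasurableSet[MeasurableSpace.comap
        (fun (ω : ℕ → X) (i : Fin (n + 1)) => ω (i : ℕ)) inferInstance] B →
      ∀ g : (ℕ → X) → ℝ≥0∞, Measurable g →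
        ∫⁻ ω in B, g (fun k => ω (k + n)) ∂(P x)
          = ∫⁻ ω in B, (∫⁻ ω', g ω' ∂(P (ω n))) ∂(P x))
    (E : Set X) (hE : MeasurableSet E) (ε : ℝ) (hε : 0 < ε)
    (hio : ∀ x, ∀ᵐ ω ∂(P x), {n : ℕ | ω n ∈ E}.Infinite)
    (hinv : ∀ y ∈ E, ENNReal.ofReal ε ≤ P y {ω | ∀ n : ℕ, ω n ∈ E}) :
    ∀ x, ∀ᵐ ω ∂(P x), ∃ n₀ : ℕ, ∀ n ≥ n₀, ω n ∈ E :=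
  stmt7_general P hprob hmarkov E hE ε hε hio hinv
end

section
/- Let X be a measurable space, κ a Markov kernel from X to X, and for x ∈ X let ℙ_x denote the law of the time-homogeneous Markov chain (X_n)_{n∈ℕ} with X_0 = x and transition kernel κ (the trajectory measure on X^ℕ given by the Ionescu–Tulcea construction). Let E ⊆ X be a measurable set and ε > 0, and assume: (i) for every x ∈ X, ℙ_x-almost surely the chain visits E infinitely often; (ii) for every y ∈ E, ℙ_y(X_n ∈ E for all n ≥ 0) ≥ ε. For a trajectory (X_n), let U denote the number of exits from E, i.e. the number of indices n with X_n ∈ E and X_{n+1} ∉ E. Then for every starting point x ∈ E and every integer N ≥ 1, ℙ_x(U ≥ N) ≤ (1 − ε)^N. -/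
/-!
Split the event of at least `N + 1` exits according to the time `n` of the first return to `E`
after the first exit. Recurrence makes this time almost surely finite; the events
`{n is that time}` are disjoint, determined by the path up to time `n`, and contained in the
event of leaving `E`, whose probability from a point of `E` is at most `1 - ε`. On each of them
the path after time `n` starts in `E` and still has at least `N` exits, so the Markov property
at the fixed time `n` and induction on `N` give `(1 - ε) ^ N`.
-/

open MeasureTheory ProbabilityTheory Filter ENNReal

theorem Set.natCast_le_encard_iff_exists_finset {α : Type*} {s : Set α} {N : ℕ} :
    (N : ℕ∞) ≤ s.encard ↔ ∃ t : Finset α, t.card = N ∧ ↑t ⊆ s := by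
  constructor
  · intro h
    obtain ⟨t, hts, htN⟩ := Set.exists_subset_encard_eq h
    have ht : t.Finite := Set.finite_of_encard_eq_coe htN
    refine ⟨ht.toFinset, ?_, by simpa using hts⟩
    rwa [ht.encard_eq_coe_toFinset_card, Nat.cast_inj] at htN
  · rintro ⟨t, rfl, hts⟩
    simpa using Set.encard_le_encard hts

section

variable {X : Type*} (E : Set X)

def exitTimes (ω : ℕ → X) : Set ℕ := {n | ω n ∈ E ∧ ω (n + 1) ∉ E}

def IsFirstReturnAfterExit (n : ℕ) (ω : ℕ → X) : Prop :=
  ω n ∈ E ∧ ∃ t < n, t ∈ exitTimes E ω ∧ (∀ s < t, s ∉ exitTimes E ω) ∧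
    ∀ i ∈ Set.Ioo t n, ω i ∉ E

variable {E}

theorem exists_isFirstReturnAfterExit {ω : ℕ → X} (hinf : {n | ω n ∈ E}.Infinite)
    (hexit : (exitTimes E ω).Nonempty) : ∃ n, IsFirstReturnAfterExit E n ω := by
  set t := sInf (exitTimes E ω)
  have hret : {i | t < i ∧ ω i ∈ E}.Nonempty := by
    obtain ⟨i, hi, hti⟩ := hinf.exists_gt t
    exact ⟨i, hti, hi⟩
  obtain ⟨htn, hn⟩ := Nat.sInf_mem hret
  exact ⟨_, hn, t, htn, Nat.sInf_mem hexit, fun s => Nat.notMem_of_lt_sInf,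
    fun i hi hiE => Nat.notMem_of_lt_sInf hi.2 ⟨hi.1, hiE⟩⟩

theorem pairwise_disjoint_isFirstReturnAfterExit :
    Pairwise (Function.onFun Disjoint
      fun n => {ω : ℕ → X | IsFirstReturnAfterExit E n ω}) := by
  intro m n hmn
  wlog hlt : m < n generalizing m n
  · exact (this hmn.symm (hmn.lt_or_gt.resolve_left hlt)).symm
  refine Set.disjoint_left.2 ?_
  rintro ω ⟨hm, t, htm, ht, hfirst, -⟩ ⟨-, t', -, ht', hfirst', hnoret'⟩
  obtain rfl : t = t' := by
    by_contra hne
    rcases lt_or_gt_of_ne hne with h | h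
    exacts [hfirst' t h ht, hfirst t' h ht']
  exact hnoret' m ⟨htm, hlt⟩ hm

theorem exitTimes_eq_insert_image_shift {n : ℕ} {ω : ℕ → X}
    (h : IsFirstReturnAfterExit E n ω) :
    ∃ t < n, exitTimes E ω = insert t ((· + n) '' exitTimes E (fun k => ω (k + n))) := by
  obtain ⟨-, t, htn, ht, hfirst, hnoret⟩ := h
  refine ⟨t, htn, Set.ext fun m => ⟨fun hm => ?_, ?_⟩⟩
  · rcases lt_or_ge m n with hmn | hnm
    · refine Or.inl (le_antisymm ?_ ?_)
      · by_contra! htm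
        exact hnoret m ⟨htm, hmn⟩ hm.1
      · exact not_lt.1 fun hmt => hfirst m hmt hm
    · refine Or.inr ⟨m - n, ?_, Nat.sub_add_cancel hnm⟩
      have hsucc : m - n + 1 + n = m + 1 := by omega
      simpa [exitTimes, Nat.sub_add_cancel hnm, hsucc] using hm
  · rintro (rfl | ⟨k, hk, rfl⟩)
    · exact ht
    · simpa [exitTimes, Nat.add_right_comm] using hk

theorem encard_exitTimes_of_isFirstReturnAfterExit {n : ℕ} {ω : ℕ → X}
    (h : IsFirstReturnAfterExit E n ω) :
    (exitTimes E ω).encard = (exitTimes E (fun k => ω (k + n))).encard + 1 := by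
  obtain ⟨t, htn, heq⟩ := exitTimes_eq_insert_image_shift h
  have ht : t ∉ (· + n) '' exitTimes E (fun k => ω (k + n)) := by
    rintro ⟨k, -, hk⟩
    simp only at hk
    omega
  rw [heq, Set.encard_insert_of_notMem ht, (add_left_injective n).injOn.encard_image]

theorem exists_isFirstReturnAfterExit_and_le_encard_exitTimes_shift {ω : ℕ → X} {N : ℕ}
    (hinf : {n | ω n ∈ E}.Infinite) (hN : ((N + 1 : ℕ) : ℕ∞) ≤ (exitTimes E ω).encard) :
    ∃ n, IsFirstReturnAfterExit E n ω ∧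
      (N : ℕ∞) ≤ (exitTimes E (fun k => ω (k + n))).encard := by
  have hexit : (exitTimes E ω).Nonempty :=
    Set.one_le_encard_iff_nonempty.1 (le_trans (by simp) hN)
  obtain ⟨n, hn⟩ := exists_isFirstReturnAfterExit hinf hexit
  rw [encard_exitTimes_of_isFirstReturnAfterExit hn, Nat.cast_succ] at hN
  exact ⟨n, hn, (ENat.add_le_add_iff_right ENat.one_ne_top).1 hN⟩

theorem dependsOn_isFirstReturnAfterExit (n : ℕ) :
    DependsOn (IsFirstReturnAfterExit E n) (Set.Iic n) := by
  suffices h : ∀ ω ω' : ℕ → X, (∀ i ∈ Set.Iic n, ω i = ω' i) →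
      IsFirstReturnAfterExit E n ω → IsFirstReturnAfterExit E n ω' from
    fun ω ω' hω => propext ⟨h ω ω' hω, h ω' ω fun i hi => (hω i hi).symm⟩
  rintro ω ω' hω ⟨hn, t, htn, ht, hfirst, hnoret⟩
  have hexit : ∀ k < n, k ∈ exitTimes E ω ↔ k ∈ exitTimes E ω' := fun k hk => by
    simp only [exitTimes, Set.mem_ofPred_eq, hω k (Set.mem_Iic.2 hk.le),
      hω (k + 1) (Set.mem_Iic.2 hk)]
  refine ⟨hω n Set.self_mem_Iic ▸ hn, t, htn, (hexit t htn).1 ht,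
    fun s hs => (hexit s (hs.trans htn)).not.1 (hfirst s hs), fun i hi => ?_⟩
  exact hω i (Set.mem_Iic.2 hi.2.le) ▸ hnoret i hi

variable [MeasurableSpace X]

theorem measurable_mem_exitTimes (hE : MeasurableSet E) (k : ℕ) :
    Measurable fun ω : ℕ → X => k ∈ exitTimes E ω := by
  unfold exitTimes
  fun_prop

theorem measurableSet_natCast_le_encard_exitTimes (hE : MeasurableSet E) (N : ℕ) :
    MeasurableSet {ω : ℕ → X | (N : ℕ∞) ≤ (exitTimes E ω).encard} := by
  simp only [Set.natCast_le_encard_iff_exists_finset, Set.subset_def, Finset.mem_coe]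
  have := measurable_mem_exitTimes hE
  exact measurableSet_setOfPred.2 (by fun_prop)

theorem measurableSet_isFirstReturnAfterExit (hE : MeasurableSet E) (n : ℕ) :
    MeasurableSet {ω : ℕ → X | IsFirstReturnAfterExit E n ω} := by
  have := measurable_mem_exitTimes hE
  unfold IsFirstReturnAfterExit
  exact measurableSet_setOfPred.2 (by fun_prop)

theorem measurableSet_comap_restrict_of_dependsOn {S : Set (ℕ → X)} (hS : MeasurableSet S)
    {n : ℕ} (hdep : DependsOn (· ∈ S) (Set.Iic n)) :
    MeasurableSet[MeasurableSpace.comap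
      (fun (ω : ℕ → X) (i : Fin (n + 1)) => ω (i : ℕ)) inferInstance] S := by
  let extend : (Fin (n + 1) → X) → ℕ → X := fun v k => v ⟨min k n, by omega⟩
  refine ⟨extend ⁻¹' S, hS.preimage (by fun_prop), Set.ext fun ω => ?_⟩
  refine Eq.to_iff (hdep fun k hk => ?_)
  simp [extend, min_eq_left (Set.mem_Iic.1 hk)]

def HasMarkovProperty (P : X → Measure (ℕ → X)) : Prop :=
  ∀ (x : X) (n : ℕ) (B : Set (ℕ → X)),
    MeasurableSet[MeasurableSpace.comap
      (fun (ω : ℕ → X) (i : Fin (n + 1)) => ω (i : ℕ)) inferInstance] B →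
    ∀ g : (ℕ → X) → ℝ≥0∞, Measurable g →
      ∫⁻ ω in B, g (fun k => ω (k + n)) ∂(P x) =
        ∫⁻ ω in B, (∫⁻ ω', g ω' ∂(P (ω n))) ∂(P x)

variable {P : X → Measure (ℕ → X)}

theorem HasMarkovProperty.measure_inter_preimage_shift_le (hP : HasMarkovProperty P) (x : X)
    {n : ℕ} {B A : Set (ℕ → X)}
    (hB : MeasurableSet[MeasurableSpace.comap
      (fun (ω : ℕ → X) (i : Fin (n + 1)) => ω (i : ℕ)) inferInstance] B)
    (hA : MeasurableSet A) {c : ℝ≥0∞} (hc : ∀ ω ∈ B, P (ω n) A ≤ c) :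
    P x (B ∩ (fun ω k => ω (k + n)) ⁻¹' A) ≤ c * P x B := by
  have hshift : Measurable fun (ω : ℕ → X) k => ω (k + n) := by fun_prop
  have hB' : MeasurableSet B := Measurable.comap_le (by fun_prop) _ hB
  calc P x (B ∩ (fun ω k => ω (k + n)) ⁻¹' A)
      = ∫⁻ ω in B, ((fun ω k => ω (k + n)) ⁻¹' A).indicator 1 ω ∂(P x) := by
        rw [lintegral_indicator_one (hshift hA), Measure.restrict_apply (hshift hA),
          Set.inter_comm]
    _ = ∫⁻ ω in B, A.indicator 1 (fun k => ω (k + n)) ∂(P x) := rfl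
    _ = ∫⁻ ω in B, P (ω n) A ∂(P x) := by
        rw [hP x n B hB _ (measurable_one.indicator hA)]
        simp_rw [lintegral_indicator_one hA]
    _ ≤ ∫⁻ _ in B, c ∂(P x) := setLIntegral_mono' hB' hc
    _ = c * P x B := setLIntegral_const B c

theorem measure_natCast_le_encard_exitTimes_le [∀ x, IsProbabilityMeasure (P x)]
    (hP : HasMarkovProperty P) (hE : MeasurableSet E)
    (hio : ∀ x, ∀ᵐ ω ∂(P x), {n : ℕ | ω n ∈ E}.Infinite) {p : ℝ≥0∞}
    (hstay : ∀ y ∈ E, p ≤ P y {ω | ∀ n, ω n ∈ E}) (N : ℕ) {y : X} (hy : y ∈ E) :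
    P y {ω | (N : ℕ∞) ≤ (exitTimes E ω).encard} ≤ (1 - p) ^ N := by
  induction N generalizing y with
  | zero => simp
  | succ N ih =>
    let R n := {ω : ℕ → X | IsFirstReturnAfterExit E n ω}
    let shift n := fun (ω : ℕ → X) k => ω (k + n)
    let A (M : ℕ) := {ω : ℕ → X | (M : ℕ∞) ≤ (exitTimes E ω).encard}
    have hcover : A (N + 1) ≤ᵐ[P y] ⋃ n, R n ∩ shift n ⁻¹' A N := by
      filter_upwards [hio y] with ω hinf hω
      exact Set.mem_iUnion.2
        (exists_isFirstReturnAfterExit_and_le_encard_exitTimes_shift hinf hω)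
    have hleave : (⋃ n, R n) ⊆ {ω | ∀ n, ω n ∈ E}ᶜ := by
      rintro ω ⟨-, ⟨n, rfl⟩, -, t, -, ht, -⟩ hall
      exact ht.2 (hall (t + 1))
    have hstayE : MeasurableSet {ω : ℕ → X | ∀ n, ω n ∈ E} :=
      measurableSet_setOfPred.2 (by fun_prop)
    calc P y (A (N + 1))
        ≤ P y (⋃ n, R n ∩ shift n ⁻¹' A N) := measure_mono_ae hcover
      _ ≤ ∑' n, P y (R n ∩ shift n ⁻¹' A N) := measure_iUnion_le _
      _ ≤ ∑' n, (1 - p) ^ N * P y (R n) := by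
          refine ENNReal.tsum_le_tsum fun n => hP.measure_inter_preimage_shift_le y ?_
            (measurableSet_natCast_le_encard_exitTimes hE N) fun ω hω => ih hω.1
          exact measurableSet_comap_restrict_of_dependsOn
            (measurableSet_isFirstReturnAfterExit hE n) (dependsOn_isFirstReturnAfterExit n)
      _ = (1 - p) ^ N * P y (⋃ n, R n) := by
          rw [ENNReal.tsum_mul_left, measure_iUnion pairwise_disjoint_isFirstReturnAfterExit
            (measurableSet_isFirstReturnAfterExit hE)]
      _ ≤ (1 - p) ^ N * (1 - p) := by
          grw [hleave, prob_compl_eq_one_sub hstayE]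
          gcongr
          exact hstay y hy
      _ = (1 - p) ^ (N + 1) := (pow_succ _ _).symm

end

theorem stmt8_general {X : Type*} [MeasurableSpace X]
    (P : X → Measure (ℕ → X))
    (hprob : ∀ x, IsProbabilityMeasure (P x))
    (hmarkov : ∀ (x : X) (n : ℕ) (B : Set (ℕ → X)),
      MeasurableSet[MeasurableSpace.comap
        (fun (ω : ℕ → X) (i : Fin (n + 1)) => ω (i : ℕ)) inferInstance] B →
      ∀ g : (ℕ → X) → ℝ≥0∞, Measurable g →
        ∫⁻ ω in B, g (fun k => ω (k + n)) ∂(P x)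
          = ∫⁻ ω in B, (∫⁻ ω', g ω' ∂(P (ω n))) ∂(P x))
    (E : Set X) (hE : MeasurableSet E) (ε : ℝ)
    (hio : ∀ x, ∀ᵐ ω ∂(P x), {n : ℕ | ω n ∈ E}.Infinite)
    (hinv : ∀ y ∈ E, ENNReal.ofReal ε ≤ P y {ω | ∀ n : ℕ, ω n ∈ E}) :
    ∀ x ∈ E, ∀ N : ℕ, 1 ≤ N →
      P x {ω | (N : ℕ∞) ≤ Set.encard {n : ℕ | ω n ∈ E ∧ ω (n + 1) ∉ E}}
        ≤ ENNReal.ofReal ((1 - ε) ^ N) := by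
  intro x hx N _
  have hε : ε ≤ 1 := ENNReal.ofReal_le_one.1 ((hinv x hx).trans prob_le_one)
  have hsub : 1 - ENNReal.ofReal ε ≤ ENNReal.ofReal (1 - ε) :=
    tsub_le_iff_right.2 (by simpa using ENNReal.ofReal_add_le (p := 1 - ε) (q := ε))
  calc P x {ω | (N : ℕ∞) ≤ (exitTimes E ω).encard}
      ≤ (1 - ENNReal.ofReal ε) ^ N :=
        measure_natCast_le_encard_exitTimes_le hmarkov hE hio hinv N hx
    _ ≤ ENNReal.ofReal (1 - ε) ^ N := by gcongr
    _ = ENNReal.ofReal ((1 - ε) ^ N) := (ENNReal.ofReal_pow (by linarith) N).symm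

/-- Let `κ` be a Markov kernel on `X` and, for `x : X`, let `P x` be the law on `X^ℕ`
of the time-homogeneous Markov chain started at `x` with transition kernel `κ` (the
Ionescu–Tulcea trajectory measure), characterized here by: `P x` is a probability
measure, the chain starts at `x`, the one-step law is `κ x`, and the time-homogeneous
Markov property holds. Let `E` be a measurable set and `ε > 0` with: (i) for every `x`,
`P x`-a.s. the chain visits `E` infinitely often; (ii) for every `y ∈ E`,
`P y (∀ n, X n ∈ E) ≥ ε`. Let `U ω` be the number of exits from `E`, i.e. the
cardinality of `{n | ω n ∈ E ∧ ω (n+1) ∉ E}`. Then for every starting point `x ∈ E` and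
every `N ≥ 1`, `P x (U ≥ N) ≤ (1 - ε)^N`. -/
theorem stmt8 {X : Type*} [MeasurableSpace X]
    (κ : Kernel X X) [IsMarkovKernel κ]
    (P : X → Measure (ℕ → X))
    (hprob : ∀ x, IsProbabilityMeasure (P x))
    (hstart : ∀ x, P x {ω | ω 0 = x} = 1)
    (hstep : ∀ x, (P x).map (fun ω => ω 1) = κ x)
    (hmarkov : ∀ (x : X) (n : ℕ) (B : Set (ℕ → X)),
      MeasurableSet[MeasurableSpace.comap
        (fun (ω : ℕ → X) (i : Fin (n + 1)) => ω (i : ℕ)) inferInstance] B →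
      ∀ g : (ℕ → X) → ℝ≥0∞, Measurable g →
        ∫⁻ ω in B, g (fun k => ω (k + n)) ∂(P x)
          = ∫⁻ ω in B, (∫⁻ ω', g ω' ∂(P (ω n))) ∂(P x))
    (E : Set X) (hE : MeasurableSet E) (ε : ℝ) (hε : 0 < ε)
    (hio : ∀ x, ∀ᵐ ω ∂(P x), {n : ℕ | ω n ∈ E}.Infinite)
    (hinv : ∀ y ∈ E, ENNReal.ofReal ε ≤ P y {ω | ∀ n : ℕ, ω n ∈ E}) :
    ∀ x ∈ E, ∀ N : ℕ, 1 ≤ N →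
      P x {ω | (N : ℕ∞) ≤ Set.encard {n : ℕ | ω n ∈ E ∧ ω (n + 1) ∉ E}}
        ≤ ENNReal.ofReal ((1 - ε) ^ N) :=
  stmt8_general P hprob hmarkov E hE ε hio hinv
end
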